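/- arXiv:2604.15630 — 3 statements merged into one kernel-verified Lean document; each statement's English description precedes it below -/
import Mathlib

section
/- Let Ψ : ℝ × ℝ → ℝ be C² and h : ℝ → ℝ be C¹. Define F by F_{01} = h(Ψ), F_{02} = ∂ₜΨ, F_{12} = ∂ₓΨ (antisymmetric, other components zero), and J^μ = ∂_ν F^{νμ} with indices raised by η = diag(−1,1,1,1). Then at each point (t,x), the force-free condition F_{μν} J^ν = 0 (for all μ) holds if and only if both (∂ₜₜΨ − ∂ₓₓΨ + h(Ψ)h'(Ψ))·∂ₜΨ = 0 and (∂ₜₜΨ − ∂ₓₓΨ + h(Ψ)h'(Ψ))·∂ₓΨ = 0 hold at that point. -/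
noncomputable section

/-- `∂ₜΨ`. -/
def psiT (Ψ : ℝ × ℝ → ℝ) (t x : ℝ) : ℝ := deriv (fun s => Ψ (s, x)) t

/-- `∂ₓΨ`. -/
def psiX (Ψ : ℝ × ℝ → ℝ) (t x : ℝ) : ℝ := deriv (fun s => Ψ (t, s)) x

/-- `∂ₜₜΨ`. -/
def psiTT (Ψ : ℝ × ℝ → ℝ) (t x : ℝ) : ℝ := deriv (fun s => psiT Ψ s x) t

/-- `∂ₓₓΨ`. -/
def psiXX (Ψ : ℝ × ℝ → ℝ) (t x : ℝ) : ℝ := deriv (fun s => psiX Ψ t s) x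

/-- The antisymmetric field tensor `F_{μν}` of the ansatz
`F = dΨ ∧ dy + h(Ψ) dt ∧ dx`, with `F_{01} = h(Ψ)`, `F_{02} = ∂ₜΨ`, `F_{12} = ∂ₓΨ`. -/
def Fdown (Ψ : ℝ × ℝ → ℝ) (h : ℝ → ℝ) (p : Fin 4 → ℝ) : Matrix (Fin 4) (Fin 4) ℝ :=
  !![0, h (Ψ (p 0, p 1)), psiT Ψ (p 0) (p 1), 0;
     -(h (Ψ (p 0, p 1))), 0, psiX Ψ (p 0) (p 1), 0;
     -(psiT Ψ (p 0) (p 1)), -(psiX Ψ (p 0) (p 1)), 0, 0;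
     0, 0, 0, 0]

/-- The Minkowski metric `η = diag(-1,1,1,1)`. -/
def eta : Matrix (Fin 4) (Fin 4) ℝ := Matrix.diagonal ![-1, 1, 1, 1]

/-- `F^{νμ} = η^{να} η^{μβ} F_{αβ}` (indices raised with `η`). -/
def Fup (Ψ : ℝ × ℝ → ℝ) (h : ℝ → ℝ) (p : Fin 4 → ℝ) : Matrix (Fin 4) (Fin 4) ℝ :=
  fun ν μ => ∑ α : Fin 4, ∑ β : Fin 4, eta ν α * eta μ β * Fdown Ψ h p α β

/-- Coordinate partial derivative `∂_ν f` on ℝ⁴. -/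
def pd (ν : Fin 4) (f : (Fin 4 → ℝ) → ℝ) (p : Fin 4 → ℝ) : ℝ :=
  deriv (fun s => f (Function.update p ν s)) (p ν)

/-- The four-current `J^μ = ∂_ν F^{νμ}`. -/
def Jcur (Ψ : ℝ × ℝ → ℝ) (h : ℝ → ℝ) (p : Fin 4 → ℝ) (μ : Fin 4) : ℝ :=
  ∑ ν : Fin 4, pd ν (fun q => Fup Ψ h q ν μ) p

/-! Raising both indices with `η` only flips the sign of the components of `F` with exactly one
time index. Differentiating the entries, the chain rule gives
`J = (h'(Ψ) ∂ₓΨ, -h'(Ψ) ∂ₜΨ, ∂ₓₓΨ - ∂ₜₜΨ, 0)`. Contracting with `F`, the `y`-component of the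
Lorentz force cancels and its `t`- and `x`-components are `-W ∂ₜΨ` and `-W ∂ₓΨ`, where
`W = ∂ₜₜΨ - ∂ₓₓΨ + h(Ψ) h'(Ψ)`. -/

lemma Fup_apply (Ψ : ℝ × ℝ → ℝ) (h : ℝ → ℝ) (p : Fin 4 → ℝ) (ν μ : Fin 4) :
    Fup Ψ h p ν μ = ![-1, 1, 1, 1] ν * ![-1, 1, 1, 1] μ * Fdown Ψ h p ν μ := by
  simp [Fup, eta, Matrix.diagonal_apply, ite_mul]

lemma deriv_comp_eq_mul_psiT {Ψ : ℝ × ℝ → ℝ} {h : ℝ → ℝ} {t x : ℝ}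
    (hΨ : DifferentiableAt ℝ Ψ (t, x)) (hh : DifferentiableAt ℝ h (Ψ (t, x))) :
    deriv (fun s => h (Ψ (s, x))) t = deriv h (Ψ (t, x)) * psiT Ψ t x :=
  deriv_comp (h := fun s => Ψ (s, x)) t hh
    (hΨ.comp t (differentiableAt_id.prodMk (differentiableAt_const x)))

lemma deriv_comp_eq_mul_psiX {Ψ : ℝ × ℝ → ℝ} {h : ℝ → ℝ} {t x : ℝ}
    (hΨ : DifferentiableAt ℝ Ψ (t, x)) (hh : DifferentiableAt ℝ h (Ψ (t, x))) :
    deriv (fun s => h (Ψ (t, s))) x = deriv h (Ψ (t, x)) * psiX Ψ t x :=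
  deriv_comp (h := fun s => Ψ (t, s)) x hh
    (hΨ.comp x ((differentiableAt_const t).prodMk differentiableAt_id))

lemma Jcur_eq {Ψ : ℝ × ℝ → ℝ} {h : ℝ → ℝ} {p : Fin 4 → ℝ}
    (hΨ : DifferentiableAt ℝ Ψ (p 0, p 1)) (hh : DifferentiableAt ℝ h (Ψ (p 0, p 1))) :
    Jcur Ψ h p = ![deriv h (Ψ (p 0, p 1)) * psiX Ψ (p 0) (p 1),
      -(deriv h (Ψ (p 0, p 1)) * psiT Ψ (p 0) (p 1)),
      psiXX Ψ (p 0) (p 1) - psiTT Ψ (p 0) (p 1), 0] := by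
  funext μ
  fin_cases μ <;>
    simp [Jcur, Fin.sum_univ_four, pd, Fup_apply, Fdown, Function.update_apply,
      deriv_comp_eq_mul_psiT hΨ hh, deriv_comp_eq_mul_psiX hΨ hh, psiTT, psiXX, neg_add_eq_sub]

def waveResidual (Ψ : ℝ × ℝ → ℝ) (h : ℝ → ℝ) (t x : ℝ) : ℝ :=
  psiTT Ψ t x - psiXX Ψ t x + h (Ψ (t, x)) * deriv h (Ψ (t, x))

lemma lorentzForce_eq {Ψ : ℝ × ℝ → ℝ} {h : ℝ → ℝ} {p : Fin 4 → ℝ}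
    (hΨ : DifferentiableAt ℝ Ψ (p 0, p 1)) (hh : DifferentiableAt ℝ h (Ψ (p 0, p 1))) :
    (fun μ => ∑ ν : Fin 4, Fdown Ψ h p μ ν * Jcur Ψ h p ν) =
      ![-(waveResidual Ψ h (p 0) (p 1) * psiT Ψ (p 0) (p 1)),
        -(waveResidual Ψ h (p 0) (p 1) * psiX Ψ (p 0) (p 1)), 0, 0] := by
  funext μ
  fin_cases μ <;> simp [Fin.sum_univ_four, Fdown, Jcur_eq hΨ hh, waveResidual] <;> ring

/-- the force-free condition `F_{μν} J^ν = 0` (for all `μ`) holds at a point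
iff `(∂ₜₜΨ − ∂ₓₓΨ + h(Ψ)h'(Ψ))·∂ₜΨ = 0` and `(∂ₜₜΨ − ∂ₓₓΨ + h(Ψ)h'(Ψ))·∂ₓΨ = 0` there. -/
theorem stmt2 (Ψ : ℝ × ℝ → ℝ) (h : ℝ → ℝ)
    (hΨ : ContDiff ℝ 2 Ψ) (hh : ContDiff ℝ 1 h) (p : Fin 4 → ℝ) :
    (∀ μ : Fin 4, ∑ ν : Fin 4, Fdown Ψ h p μ ν * Jcur Ψ h p ν = 0) ↔
      ((psiTT Ψ (p 0) (p 1) - psiXX Ψ (p 0) (p 1)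
          + h (Ψ (p 0, p 1)) * deriv h (Ψ (p 0, p 1))) * psiT Ψ (p 0) (p 1) = 0 ∧
       (psiTT Ψ (p 0) (p 1) - psiXX Ψ (p 0) (p 1)
          + h (Ψ (p 0, p 1)) * deriv h (Ψ (p 0, p 1))) * psiX Ψ (p 0) (p 1) = 0) := by
  simp only [Fin.forall_fin_succ, IsEmpty.forall_iff, funext_iff.mp
    (lorentzForce_eq (p := p) (hΨ.differentiable two_ne_zero _) (hh.differentiable one_ne_zero _))]
  simp [waveResidual]
end
end

section
/- Let v ∈ ℝ with |v| < 1 and Ψ(t,x) = 4·arctan(exp((x − vt)/√(1 − v²))). With h(Ψ) = 2·sin(Ψ/2), the invariant Δ = (∂ₓΨ)² − (∂ₜΨ)² − h(Ψ)² vanishes identically: (∂ₓΨ)² − (∂ₜΨ)² − 4·sin²(Ψ/2) = 0 at every point (t,x) ∈ ℝ². That is, the sine–Gordon kink produces a null force-free configuration (|B|² = |E|²). -/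
/-!
The kink is a Lorentz-boosted static profile `φ((x − vt)/√(1 − v²))` with `φ(u) = 4 arctan eᵘ`.
For any boosted profile, `(∂ₓΨ)² − (∂ₜΨ)² = φ'(u)² (1 − v²)/(1 − v²) = φ'(u)²`, and the kink
profile solves the first-order (Bogomolny) equation `φ' = 2 sin(φ/2)`, since
`sin (2 arctan y) = 2y/(1 + y²)`.
-/

noncomputable section

open Real

theorem sin_two_mul_arctan (y : ℝ) : sin (2 * arctan y) = 2 * y / (1 + y ^ 2) := by
  have hsq : √(1 + y ^ 2) ^ 2 = 1 + y ^ 2 := sq_sqrt (by positivity)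
  rw [sin_two_mul, sin_arctan, cos_arctan]
  field_simp
  rw [hsq]

theorem hasDerivAt_four_mul_arctan_exp (u : ℝ) :
    HasDerivAt (fun u => 4 * arctan (exp u)) (2 * sin (4 * arctan (exp u) / 2)) u := by
  refine ((hasDerivAt_exp u).arctan.const_mul 4).congr_deriv ?_
  rw [show 4 * arctan (exp u) / 2 = 2 * arctan (exp u) by ring, sin_two_mul_arctan]
  ring

section TravelingWave

variable {φ φ' : ℝ → ℝ} {Ψ : ℝ × ℝ → ℝ} {v c : ℝ}

theorem psiX_travelingWave (hφ : ∀ u, HasDerivAt φ (φ' u) u)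
    (hΨ : ∀ t x, Ψ (t, x) = φ ((x - v * t) / c)) (t x : ℝ) :
    psiX Ψ t x = φ' ((x - v * t) / c) / c := by
  have hphase : HasDerivAt (fun s => (s - v * t) / c) (1 / c) x :=
    ((hasDerivAt_id x).sub_const (v * t)).div_const c
  have hwave : HasDerivAt (fun s => φ ((s - v * t) / c)) _ x := (hφ _).comp x hphase
  rw [psiX, funext fun s => hΨ t s, hwave.deriv, mul_one_div]

theorem psiT_travelingWave (hφ : ∀ u, HasDerivAt φ (φ' u) u)
    (hΨ : ∀ t x, Ψ (t, x) = φ ((x - v * t) / c)) (t x : ℝ) :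
    psiT Ψ t x = -v * φ' ((x - v * t) / c) / c := by
  have hphase : HasDerivAt (fun s => (x - v * s) / c) (-v / c) t := by
    simpa using ((hasDerivAt_id t).const_mul v).const_sub x |>.div_const c
  have hwave : HasDerivAt (fun s => φ ((x - v * s) / c)) _ t := (hφ _).comp t hphase
  rw [psiT, funext fun s => hΨ s x, hwave.deriv]
  ring

theorem psiX_sq_sub_psiT_sq_of_boost (hv : |v| < 1) (hφ : ∀ u, HasDerivAt φ (φ' u) u)
    (hΨ : ∀ t x, Ψ (t, x) = φ ((x - v * t) / √(1 - v ^ 2))) (t x : ℝ) :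
    psiX Ψ t x ^ 2 - psiT Ψ t x ^ 2 = φ' ((x - v * t) / √(1 - v ^ 2)) ^ 2 := by
  have hγ : 0 < 1 - v ^ 2 := by nlinarith [abs_lt.mp hv]
  have hγsq : √(1 - v ^ 2) ^ 2 = 1 - v ^ 2 := sq_sqrt hγ.le
  have hγne : √(1 - v ^ 2) ≠ 0 := (sqrt_pos.mpr hγ).ne'
  rw [psiX_travelingWave hφ hΨ, psiT_travelingWave hφ hΨ]
  field_simp
  linear_combination (-φ' ((x - v * t) / √(1 - v ^ 2)) ^ 2) * hγsq

end TravelingWave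

/-- for the sine–Gordon kink `Ψ = 4·arctan(exp((x − vt)/√(1 − v²)))`, `|v| < 1`,
with `h(Ψ) = 2·sin(Ψ/2)`, the invariant `Δ = (∂ₓΨ)² − (∂ₜΨ)² − h(Ψ)²` vanishes identically:
`(∂ₓΨ)² − (∂ₜΨ)² − 4·sin²(Ψ/2) = 0` everywhere, i.e. the kink is a null configuration. -/
theorem stmt7 (v : ℝ) (hv : |v| < 1) (Ψ : ℝ × ℝ → ℝ)
    (hΨ : ∀ t x : ℝ,
      Ψ (t, x) = 4 * Real.arctan (Real.exp ((x - v * t) / Real.sqrt (1 - v ^ 2)))) :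
    ∀ t x : ℝ,
      (psiX Ψ t x) ^ 2 - (psiT Ψ t x) ^ 2 - 4 * (Real.sin (Ψ (t, x) / 2)) ^ 2 = 0 := by
  intro t x
  rw [psiX_sq_sub_psiT_sq_of_boost hv hasDerivAt_four_mul_arctan_exp hΨ, hΨ]
  ring
end
end

section
/- Let m > 0, v ∈ ℝ with |v| < 1, λ = m/√(1 − v²), and Ψ(t,x) = sinh(λ(x − vt)). Then: (i) Ψ satisfies the Klein–Gordon equation ∂ₜₜΨ − ∂ₓₓΨ + m²Ψ = 0 at every point; and (ii) with h(Ψ) = mΨ, the invariant Δ = (∂ₓΨ)² − (∂ₜΨ)² − m²Ψ² equals m² > 0 at every point, so the corresponding force-free field is everywhere magnetically dominated. -/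
noncomputable section

lemma lin_t (lam v x t : ℝ) : HasDerivAt (fun s : ℝ => lam * (x - v * s)) (-(lam * v)) t := by
  have := (((hasDerivAt_id t).const_mul v).const_sub x).const_mul lam
  simpa using this

lemma lin_x (lam v t x : ℝ) : HasDerivAt (fun s : ℝ => lam * (s - v * t)) lam x := by
  have := ((hasDerivAt_id x).sub_const (v * t)).const_mul lam
  simpa using this

lemma hT (lam v x t : ℝ) :
    HasDerivAt (fun s => Real.sinh (lam * (x - v * s)))
      (Real.cosh (lam * (x - v * t)) * (-(lam * v))) t :=
  (Real.hasDerivAt_sinh _).comp t (lin_t lam v x t)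

lemma hTT (lam v x t : ℝ) :
    HasDerivAt (fun s => Real.cosh (lam * (x - v * s)) * (-(lam * v)))
      (Real.sinh (lam * (x - v * t)) * (-(lam * v)) * (-(lam * v))) t :=
  (((Real.hasDerivAt_cosh _).comp t (lin_t lam v x t)).mul_const _)

lemma hX (lam v t x : ℝ) :
    HasDerivAt (fun s => Real.sinh (lam * (s - v * t)))
      (Real.cosh (lam * (x - v * t)) * lam) x :=
  (Real.hasDerivAt_sinh _).comp x (lin_x lam v t x)

lemma hXX (lam v t x : ℝ) :
    HasDerivAt (fun s => Real.cosh (lam * (s - v * t)) * lam)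
      (Real.sinh (lam * (x - v * t)) * lam * lam) x :=
  (((Real.hasDerivAt_cosh _).comp x (lin_x lam v t x)).mul_const _)

/-- with `m > 0`, `|v| < 1`, `λ = m/√(1 − v²)`, the profile
`Ψ(t,x) = sinh(λ(x − vt))` solves the Klein–Gordon equation
`∂ₜₜΨ − ∂ₓₓΨ + m²Ψ = 0`, and with `h(Ψ) = mΨ` the invariant
`Δ = (∂ₓΨ)² − (∂ₜΨ)² − m²Ψ²` equals `m² > 0` everywhere, so the corresponding
force-free field is everywhere magnetically dominated. -/
theorem stmt17 (m v lam : ℝ) (hm : 0 < m) (hv : |v| < 1)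
    (hlam : lam = m / Real.sqrt (1 - v ^ 2))
    (Ψ : ℝ × ℝ → ℝ)
    (hΨ : ∀ t x : ℝ, Ψ (t, x) = Real.sinh (lam * (x - v * t))) :
    (∀ t x : ℝ, psiTT Ψ t x - psiXX Ψ t x + m ^ 2 * Ψ (t, x) = 0) ∧
    (∀ t x : ℝ,
      (psiX Ψ t x) ^ 2 - (psiT Ψ t x) ^ 2 - m ^ 2 * (Ψ (t, x)) ^ 2 = m ^ 2) ∧
    0 < m ^ 2 := by
  have hv2 : (0:ℝ) < 1 - v ^ 2 := by
    have := abs_lt.mp hv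
    nlinarith
  have hs : Real.sqrt (1 - v ^ 2) ^ 2 = 1 - v ^ 2 := Real.sq_sqrt hv2.le
  have hsp : (0:ℝ) < Real.sqrt (1 - v ^ 2) := Real.sqrt_pos.mpr hv2
  have hlam2 : lam ^ 2 * (1 - v ^ 2) = m ^ 2 := by
    rw [hlam, div_pow, hs]
    field_simp
  have hpT : ∀ t x : ℝ, psiT Ψ t x = Real.cosh (lam * (x - v * t)) * (-(lam * v)) := by
    intro t x
    have : (fun s => Ψ (s, x)) = fun s => Real.sinh (lam * (x - v * s)) :=
      funext fun s => hΨ s x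
    rw [psiT, this, (hT lam v x t).deriv]
  have hpX : ∀ t x : ℝ, psiX Ψ t x = Real.cosh (lam * (x - v * t)) * lam := by
    intro t x
    have : (fun s => Ψ (t, s)) = fun s => Real.sinh (lam * (s - v * t)) :=
      funext fun s => hΨ t s
    rw [psiX, this, (hX lam v t x).deriv]
  have hpTT : ∀ t x : ℝ, psiTT Ψ t x
      = Real.sinh (lam * (x - v * t)) * (-(lam * v)) * (-(lam * v)) := by
    intro t x
    have : (fun s => psiT Ψ s x)
        = fun s => Real.cosh (lam * (x - v * s)) * (-(lam * v)) :=
      funext fun s => hpT s x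
    rw [psiTT, this, (hTT lam v x t).deriv]
  have hpXX : ∀ t x : ℝ, psiXX Ψ t x
      = Real.sinh (lam * (x - v * t)) * lam * lam := by
    intro t x
    have : (fun s => psiX Ψ t s)
        = fun s => Real.cosh (lam * (s - v * t)) * lam :=
      funext fun s => hpX t s
    rw [psiXX, this, (hXX lam v t x).deriv]
  refine ⟨fun t x => ?_, fun t x => ?_, by positivity⟩
  · rw [hpTT, hpXX, hΨ]
    linear_combination (-Real.sinh (lam * (x - v * t))) * hlam2
  · rw [hpT, hpX, hΨ]
    nlinarith [Real.cosh_sq_sub_sinh_sq (lam * (x - v * t))]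
end
end
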